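/- Let Γ = (V,E) be a vertex-transitive finite loopless digraph of out-degree r ≥ 1 and girth g. Then g ≤ ⌈(|V|−1)/r⌉ + 1. -/

import Mathlib

/-- Image of a point under a relation. -/
def relImage {V : Type*} (E : V → V → Prop) (a : V) : Set V := {x | E a x}

/-- Image of a set under a relation. -/
def relSetImage {V : Type*} (E : V → V → Prop) (A : Set V) : Set V :=
  {y | ∃ x ∈ A, E x y}

/-- j-fold relational composition, with `relPow E 0` the identity relation. -/
def relPow {V : Type*} (E : V → V → Prop) : ℕ → V → V → Prop
  | 0 => fun x y => x = y
  | (n+1) => fun x y => ∃ z, relPow E n x z ∧ E z y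

/-- `f` is an automorphism of the relation `E`. -/
def IsRelAuto {V : Type*} (E : V → V → Prop) (f : V ≃ V) : Prop :=
  ∀ x y, E x y ↔ E (f x) (f y)

/-- The relation `E` is point-symmetric (vertex-transitive). -/
def PointSym {V : Type*} (E : V → V → Prop) : Prop :=
  ∀ x y : V, ∃ f : V ≃ V, IsRelAuto E f ∧ f x = y

/-- Boundary of a set: `∂(X) = Γ(X) \ X`. -/
def relBd {V : Type*} (E : V → V → Prop) (X : Set V) : Set V :=
  relSetImage E X \ X

/-- Admissible sets for the definition of connectivity. -/
def relAdm {V : Type*} (E : V → V → Prop) (X : Set V) : Prop :=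
  X.Finite ∧ X.Nonempty ∧ relSetImage E X ≠ Set.univ

/-- Connectivity: minimum boundary size over admissible sets. -/
noncomputable def relKappa {V : Type*} (E : V → V → Prop) : ℕ :=
  sInf {n | ∃ X : Set V, relAdm E X ∧ (relBd E X).ncard = n}

/-- A fragment achieves the connectivity. -/
def IsFragment {V : Type*} (E : V → V → Prop) (X : Set V) : Prop :=
  relAdm E X ∧ (relBd E X).ncard = relKappa E

/-- Cardinality of an atom. -/
noncomputable def atomCard {V : Type*} (E : V → V → Prop) : ℕ :=
  sInf {n | ∃ X : Set V, IsFragment E X ∧ X.ncard = n}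

/-- An atom: a fragment of minimum cardinality. -/
def IsRelAtom {V : Type*} (E : V → V → Prop) (A : Set V) : Prop :=
  IsFragment E A ∧ A.ncard = atomCard E

/-- `E` has a directed cycle of length `k`: `k` distinct vertices cyclically joined. -/
def HasCycle {V : Type*} (E : V → V → Prop) (k : ℕ) : Prop :=
  ∃ (a : V) (l : List V), (a :: l).length = k ∧ (a :: l).Nodup ∧
    List.Chain E a (l ++ [a])

/-!
Hamidoune's atom method. Let `κ` be the least boundary size `|Γ(X) \ X|` over finite nonempty `X`
with `Γ(X) ≠ V`. Out-balls of radius less than `g - 1` are such sets, so each grows by at least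
`κ` and `|V| ≥ 1 + r + κ (g - 2)`, which suffices when `κ ≥ r`. Otherwise, after possibly
reversing all arcs, an atom `A` (a smallest set of boundary size `κ`) is no larger than
`Ω(F) = V \ (F ∪ Γ(F))` for any such `F`; submodularity of `X ↦ |Γ(X) \ X|` then forces `A ⊆ F`
whenever `A` meets `F`. So atoms are blocks of imprimitivity, and `A` induces a vertex-transitive
digraph of out-degree `s ≥ r - κ` and girth at least `g`. By induction `|A| ≥ s (g - 2) + 2`;
with `|V| ≥ 2 |A| + κ` and the count `|A| (r - s) ≤ κ r` of arcs leaving `A` this yields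
`|V| ≥ r (g - 2) + 2`, which is the claimed bound.
-/

section Cycles

variable {V : Type*} {E : V → V → Prop}

theorem exists_hasCycle_le_of_isChain {a : V} {l : List V}
    (h : List.IsChain E (a :: (l ++ [a]))) : ∃ k ≤ l.length + 1, HasCycle E k := by
  induction hn : l.length using Nat.strong_induction_on generalizing a l with
  | _ n IH =>
  by_cases hnd : (a :: l).Nodup
  · exact ⟨l.length + 1, hn ▸ le_rfl, a, l, rfl, hnd, h⟩
  -- a repeated vertex `x` splits off a strictly shorter closed walk from `x` to `x`
  obtain ⟨x, hx⟩ := not_forall_not.mp (mt List.nodup_iff_sublist.mpr hnd)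
  obtain ⟨r₁, r₂, hr, hx₁, hx₂⟩ := List.cons_sublist_iff.mp hx
  obtain ⟨p, m₁, rfl⟩ := List.append_of_mem hx₁
  obtain ⟨m₂, q, rfl⟩ := List.append_of_mem (List.singleton_sublist.mp hx₂)
  have hlen := congrArg List.length hr
  simp only [List.length_cons, List.length_append] at hlen
  have hwalk : List.IsChain E (x :: ((m₁ ++ m₂) ++ [x])) := by
    refine h.infix ⟨p, q ++ [a], ?_⟩
    rw [show a :: (l ++ [a]) = (a :: l) ++ [a] from rfl, hr]
    simp
  obtain ⟨k, hk, hcyc⟩ := IH _ (by simp only [List.length_append] at hlen ⊢; omega) hwalk rfl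
  exact ⟨k, by simp only [List.length_append] at hk ⊢; omega, hcyc⟩

theorem exists_isChain_of_relPow {j : ℕ} {x y : V} (h : relPow E (j + 1) x y) :
    ∃ l : List V, l.length = j ∧ List.IsChain E (x :: (l ++ [y])) := by
  induction j generalizing y with
  | zero =>
    obtain ⟨z, rfl, hzy⟩ := h
    exact ⟨[], rfl, List.isChain_pair.mpr hzy⟩
  | succ j IH =>
    obtain ⟨z, hxz, hzy⟩ := h
    obtain ⟨l, rfl, hl⟩ := IH hxz
    refine ⟨l ++ [z], by simp, ?_⟩
    rw [show x :: (l ++ [z] ++ [y]) = x :: (l ++ [z]) ++ [y] from rfl, List.isChain_append]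
    exact ⟨hl, by simp, fun w hw _ hv ↦ by
      rw [← List.cons_append, List.getLast?_concat, Option.mem_some_iff] at hw
      simp_all⟩

theorem exists_hasCycle_le_of_relPow {j : ℕ} {x : V} (h : relPow E (j + 1) x x) :
    ∃ k ≤ j + 1, HasCycle E k := by
  obtain ⟨l, rfl, hl⟩ := exists_isChain_of_relPow h
  exact exists_hasCycle_le_of_isChain hl

theorem HasCycle.two_le (hloop : ∀ x, ¬ E x x) {k : ℕ} (h : HasCycle E k) : 2 ≤ k := by
  obtain ⟨a, _ | ⟨b, l⟩, rfl, -, hc⟩ := h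
  · exact absurd (List.rel_of_isChain_cons_cons hc) (hloop a)
  · simp

theorem HasCycle.map {W : Type*} {F : W → W → Prop} {f : V → W} (hf : Function.Injective f)
    (hE : ∀ x y, E x y → F (f x) (f y)) {k : ℕ} (h : HasCycle E k) : HasCycle F k := by
  obtain ⟨a, l, rfl, hnd, hc⟩ := h
  refine ⟨f a, l.map f, by simp, List.map_cons .. ▸ hnd.map hf, ?_⟩
  show List.IsChain F (f a :: (l.map f ++ [f a]))
  rw [show f a :: (l.map f ++ [f a]) = (a :: (l ++ [a])).map f by simp, List.isChain_map]
  exact List.IsChain.imp hE hc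

theorem HasCycle.flip {k : ℕ} (h : HasCycle E k) : HasCycle (flip E) k := by
  obtain ⟨a, l, rfl, hnd, hc⟩ := h
  refine ⟨a, l.reverse, by simp, (List.reverse_perm l).cons a |>.nodup_iff.mpr hnd, ?_⟩
  have := List.isChain_reverse.mpr (show List.IsChain E (a :: l ++ [a]) from hc)
  simp only [List.reverse_append, List.reverse_cons, List.reverse_nil] at this
  exact this

end Cycles

section Degrees

variable {V : Type*} {E : V → V → Prop}

theorem relSetImage_singleton (x : V) : relSetImage E {x} = relImage E x := by
  ext; simp [relSetImage, relImage]

theorem relSetImage_image_equiv {f : V ≃ V} (hf : IsRelAuto E f) (X : Set V) :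
    relSetImage E (f '' X) = f '' relSetImage E X := by
  ext z
  simp only [relSetImage, Set.mem_image, exists_exists_and_eq_and]
  constructor
  · rintro ⟨x, hx, hxz⟩
    exact ⟨f.symm z, ⟨x, hx, (hf x _).mpr (by simpa using hxz)⟩, f.apply_symm_apply z⟩
  · rintro ⟨w, ⟨x, hx, hxw⟩, rfl⟩
    exact ⟨x, hx, (hf x w).mp hxw⟩

theorem PointSym.flip (h : PointSym E) : PointSym (flip E) := fun x y ↦
  let ⟨f, hf, hfx⟩ := h x y
  ⟨f, fun a b ↦ hf b a, hfx⟩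

theorem PointSym.ncard_relImage_eq (h : PointSym E) (x y : V) :
    (relImage E x).ncard = (relImage E y).ncard := by
  obtain ⟨f, hf, rfl⟩ := h x y
  rw [← relSetImage_singleton, ← relSetImage_singleton, ← Set.image_singleton,
    relSetImage_image_equiv hf, Set.ncard_image_of_injective _ f.injective]

open Finset in
theorem ncard_relImage_flip_eq [Finite V] [Nonempty V] (hsym : PointSym E) {r : ℕ}
    (hdeg : ∀ x, (relImage E x).ncard = r) (x : V) : (relImage (flip E) x).ncard = r := by
  classical
  have := Fintype.ofFinite V
  have hcard : ∀ y, (relImage E y).ncard = #(univ.bipartiteAbove E y) := fun y ↦ by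
    rw [← Set.ncard_coe_finset]; congr; ext; simp [relImage]
  have hcard' : ∀ y, (relImage (flip E) y).ncard = #(univ.bipartiteBelow E y) := fun y ↦ by
    rw [← Set.ncard_coe_finset]; congr; ext; simp [relImage, flip]
  have := card_mul_eq_card_mul E (s := univ) (t := univ) (m := r)
    (n := (relImage (flip E) x).ncard) (fun y _ ↦ hcard y ▸ hdeg y)
    (fun y _ ↦ hcard' y ▸ hsym.flip.ncard_relImage_eq y x)
  exact (Nat.eq_of_mul_eq_mul_left univ_nonempty.card_pos this).symm

end Degrees

section Boundary

variable {V : Type*} {E : V → V → Prop}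

def relClos (E : V → V → Prop) (X : Set V) : Set V := X ∪ relSetImage E X

def relOmega (E : V → V → Prop) (X : Set V) : Set V := (relClos E X)ᶜ

theorem relSetImage_mono {X Y : Set V} (h : X ⊆ Y) : relSetImage E X ⊆ relSetImage E Y :=
  fun _ ⟨x, hx, hxz⟩ ↦ ⟨x, h hx, hxz⟩

theorem relClos_union (X Y : Set V) : relClos E (X ∪ Y) = relClos E X ∪ relClos E Y := by
  ext z
  simp only [relClos, relSetImage, Set.mem_union, Set.mem_ofPred_eq, or_and_right, exists_or]
  exact or_or_or_comm

theorem relClos_inter_subset (X Y : Set V) :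
    relClos E (X ∩ Y) ⊆ relClos E X ∩ relClos E Y :=
  Set.subset_inter (Set.union_subset_union Set.inter_subset_left
      (relSetImage_mono Set.inter_subset_left))
    (Set.union_subset_union Set.inter_subset_right (relSetImage_mono Set.inter_subset_right))

theorem mem_relOmega {X : Set V} {z : V} :
    z ∈ relOmega E X ↔ z ∉ X ∧ z ∉ relSetImage E X := by
  simp [relOmega, relClos]

variable [Finite V]

theorem ncard_relClos (X : Set V) : (relClos E X).ncard = X.ncard + (relBd E X).ncard := by
  rw [relClos, ← Set.union_sdiff_self, Set.ncard_union_eq Set.disjoint_sdiff_right, relBd]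

theorem ncard_relClos_add_ncard_relOmega (X : Set V) :
    (relClos E X).ncard + (relOmega E X).ncard = Nat.card V :=
  Set.ncard_add_ncard_compl _

theorem ncard_relBd_union_add_ncard_relBd_inter_le (X Y : Set V) :
    (relBd E (X ∪ Y)).ncard + (relBd E (X ∩ Y)).ncard ≤
      (relBd E X).ncard + (relBd E Y).ncard := by
  have hclos := Set.ncard_union_add_ncard_inter (relClos E X) (relClos E Y)
  have hinter := Set.ncard_le_ncard (relClos_inter_subset (E := E) X Y)
  have hXY := Set.ncard_union_add_ncard_inter X Y
  rw [← relClos_union] at hclos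
  simp only [ncard_relClos] at hclos hinter
  omega

end Boundary

section Fragments

variable {V : Type*} {E : V → V → Prop}

theorem relKappa_le_ncard_relBd {X : Set V} (h : relAdm E X) :
    relKappa E ≤ (relBd E X).ncard :=
  Nat.sInf_le ⟨X, h, rfl⟩

theorem exists_isFragment {X : Set V} (h : relAdm E X) : ∃ F, IsFragment E F :=
  Nat.sInf_mem (s := {n | ∃ X : Set V, relAdm E X ∧ (relBd E X).ncard = n}) ⟨_, X, h, rfl⟩

theorem atomCard_le_ncard {F : Set V} (h : IsFragment E F) : atomCard E ≤ F.ncard :=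
  Nat.sInf_le ⟨F, h, rfl⟩

theorem exists_isRelAtom {X : Set V} (h : relAdm E X) : ∃ A, IsRelAtom E A :=
  let ⟨F, hF⟩ := exists_isFragment h
  Nat.sInf_mem (s := {n | ∃ X : Set V, IsFragment E X ∧ X.ncard = n}) ⟨_, F, hF, rfl⟩

theorem relAdm_inter {A B : Set V} (hA : relAdm E A) (hne : (A ∩ B).Nonempty) :
    relAdm E (A ∩ B) :=
  ⟨hA.1.subset Set.inter_subset_left, hne, fun h ↦
    hA.2.2 <| Set.univ_subset_iff.mp (h ▸ relSetImage_mono Set.inter_subset_left)⟩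

theorem relAdm_singleton (hloop : ∀ x, ¬ E x x) (v : V) : relAdm E {v} := by
  refine ⟨Set.finite_singleton v, Set.singleton_nonempty v, fun h ↦ hloop v ?_⟩
  have hv : v ∈ relSetImage E {v} := h ▸ Set.mem_univ v
  rwa [relSetImage_singleton] at hv

theorem relBd_singleton (hloop : ∀ x, ¬ E x x) (v : V) : relBd E {v} = relImage E v := by
  rw [relBd, relSetImage_singleton]
  exact Set.sdiff_singleton_eq_self (hloop v)

theorem relBd_flip_relOmega_subset (X : Set V) : relBd (flip E) (relOmega E X) ⊆ relBd E X := by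
  rintro z ⟨⟨w, hw, hzw⟩, hz⟩
  have hzX : z ∉ X := fun hzX ↦ (mem_relOmega.mp hw).2 ⟨z, hzX, hzw⟩
  exact ⟨by simpa [mem_relOmega, hzX] using hz, hzX⟩

theorem relSetImage_flip_relOmega_disjoint (X : Set V) :
    Disjoint (relSetImage (flip E) (relOmega E X)) X :=
  Set.disjoint_left.mpr fun z ⟨_, hw, hzw⟩ hzX ↦ (mem_relOmega.mp hw).2 ⟨z, hzX, hzw⟩

variable [Finite V] {r : ℕ}

theorem relOmega_nonempty (hindeg : ∀ x, (relImage (flip E) x).ncard = r) {X : Set V}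
    (hX : relAdm E X) (hlt : (relBd E X).ncard < r) :
    (relOmega E X).Nonempty := by
  -- otherwise a vertex outside `Γ(X)` lies in `X` and has all its in-neighbours in `∂X`
  by_contra hempty
  have hclos : ∀ z, z ∈ X ∨ z ∈ relSetImage E X := fun z ↦ by
    by_contra hz
    exact hempty ⟨z, mem_relOmega.mpr (not_or.mp hz)⟩
  obtain ⟨y, hy⟩ := (Set.ne_univ_iff_exists_notMem _).mp hX.2.2
  have hyX : y ∈ X := (hclos y).resolve_right hy
  have hsub : relImage (flip E) y ⊆ relBd E X := fun z hzy ↦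
    have hzX : z ∉ X := fun hzX ↦ hy ⟨z, hzX, hzy⟩
    ⟨(hclos z).resolve_left hzX, hzX⟩
  have := hindeg y ▸ Set.ncard_le_ncard hsub
  omega

theorem relAdm_flip_relOmega (hindeg : ∀ x, (relImage (flip E) x).ncard = r)
    {X : Set V} (hX : relAdm E X) (hlt : (relBd E X).ncard < r) :
    relAdm (flip E) (relOmega E X) := by
  refine ⟨Set.toFinite _, relOmega_nonempty hindeg hX hlt, fun h ↦ ?_⟩
  obtain ⟨x, hx⟩ := hX.2.1
  exact Set.disjoint_left.mp (relSetImage_flip_relOmega_disjoint X) (h ▸ Set.mem_univ x) hx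

theorem relKappa_flip_le (hindeg : ∀ x, (relImage (flip E) x).ncard = r) {X : Set V}
    (hX : relAdm E X) (hlt : relKappa E < r) :
    relKappa (flip E) ≤ relKappa E := by
  obtain ⟨F, hFadm, hF⟩ := exists_isFragment hX
  calc relKappa (flip E) ≤ (relBd (flip E) (relOmega E F)).ncard :=
        relKappa_le_ncard_relBd (relAdm_flip_relOmega hindeg hFadm (hF ▸ hlt))
    _ ≤ (relBd E F).ncard := Set.ncard_le_ncard (relBd_flip_relOmega_subset F)
    _ = relKappa E := hF

theorem isFragment_flip_relOmega (hindeg : ∀ x, (relImage (flip E) x).ncard = r)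
    (hκ : relKappa (flip E) = relKappa E) (hlt : relKappa E < r)
    {F : Set V} (hF : IsFragment E F) : IsFragment (flip E) (relOmega E F) := by
  have hadm := relAdm_flip_relOmega hindeg hF.1 (hF.2 ▸ hlt)
  refine ⟨hadm, le_antisymm ?_ (relKappa_le_ncard_relBd hadm)⟩
  exact hκ ▸ hF.2 ▸ Set.ncard_le_ncard (relBd_flip_relOmega_subset F)

theorem relKappa_flip_eq (hdeg : ∀ x, (relImage E x).ncard = r)
    (hindeg : ∀ x, (relImage (flip E) x).ncard = r) {X : Set V} (hX : relAdm E X)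
    (hlt : relKappa E < r) : relKappa (flip E) = relKappa E := by
  have hle := relKappa_flip_le hindeg hX hlt
  obtain ⟨F, hF⟩ := exists_isFragment hX
  exact hle.antisymm <| relKappa_flip_le (E := flip E) hdeg
    (relAdm_flip_relOmega hindeg hF.1 (hF.2 ▸ hlt)) (hle.trans_lt hlt)

theorem atomCard_le_ncard_relOmega (hdeg : ∀ x, (relImage E x).ncard = r)
    (hindeg : ∀ x, (relImage (flip E) x).ncard = r) (hlt : relKappa E < r)
    (hale : atomCard E ≤ atomCard (flip E)) {F : Set V} (hF : IsFragment E F) :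
    atomCard E ≤ (relOmega E F).ncard :=
  hale.trans <| atomCard_le_ncard <|
    isFragment_flip_relOmega hindeg (relKappa_flip_eq hdeg hindeg hF.1 hlt) hlt hF

end Fragments

section Atoms

variable {V : Type*} {E : V → V → Prop}

theorem IsRelAtom.image_equiv {A : Set V} {f : V ≃ V} (hf : IsRelAuto E f) (hA : IsRelAtom E A) :
    IsRelAtom E (f '' A) := by
  obtain ⟨⟨⟨hfin, hne, hspan⟩, hbd⟩, hcard⟩ := hA
  have hbd_image : relBd E (f '' A) = f '' relBd E A := by
    rw [relBd, relBd, relSetImage_image_equiv hf, Set.image_sdiff f.injective]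
  refine ⟨⟨⟨hfin.image f, hne.image f, ?_⟩, ?_⟩, ?_⟩
  · rw [relSetImage_image_equiv hf]
    refine fun h ↦ hspan ?_
    rw [← f.preimage_image (relSetImage E A), h, Set.preimage_univ]
  · rwa [hbd_image, Set.ncard_image_of_injective _ f.injective]
  · rwa [Set.ncard_image_of_injective _ f.injective]

variable [Finite V]

theorem IsRelAtom.relSetImage_union_ne_univ
    (hΩ : ∀ F, IsFragment E F → atomCard E ≤ (relOmega E F).ncard)
    {A F : Set V} (hA : IsRelAtom E A) (hF : IsFragment E F) (hAF : (A ∩ F).Nonempty) :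
    relSetImage E (A ∪ F) ≠ Set.univ := by
  -- otherwise counting `|X ∪ Γ(X)|` for `A`, `F` and `A ∩ F` gives `|Ω(F)| ≤ |A| - |A ∩ F|`
  intro hspan
  have hcover : (relClos E A ∪ relClos E F).ncard = Nat.card V := by
    have hsub : relSetImage E (A ∪ F) ⊆ relClos E (A ∪ F) := Set.subset_union_right
    have hclos : relClos E (A ∪ F) = Set.univ := Set.univ_subset_iff.mp (hspan ▸ hsub)
    rw [← relClos_union, hclos, Set.ncard_univ]
  have hinter := Set.ncard_le_ncard (relClos_inter_subset (E := E) A F)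
  have hunion := Set.ncard_union_add_ncard_inter (relClos E A) (relClos E F)
  have hκ := relKappa_le_ncard_relBd (relAdm_inter hA.1.1 hAF)
  have hΩF := ncard_relClos_add_ncard_relOmega (E := E) F
  have := hΩ F hF
  have := (Set.ncard_pos (hA.1.1.1.subset Set.inter_subset_left)).mpr hAF
  simp only [ncard_relClos, hA.1.2, hF.2] at hinter hunion hΩF
  have := hA.2
  omega

theorem IsRelAtom.subset_of_inter_nonempty
    (hΩ : ∀ F, IsFragment E F → atomCard E ≤ (relOmega E F).ncard)
    {A F : Set V} (hA : IsRelAtom E A) (hF : IsFragment E F) (hAF : (A ∩ F).Nonempty) :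
    A ⊆ F := by
  have hAfin := hA.1.1.1
  have hinter := relAdm_inter hA.1.1 hAF
  have hunion : relAdm E (A ∪ F) := ⟨hAfin.union hF.1.1, hA.1.1.2.1.mono Set.subset_union_left,
    hA.relSetImage_union_ne_univ hΩ hF hAF⟩
  have hsub := ncard_relBd_union_add_ncard_relBd_inter_le (E := E) A F
  have h₁ := relKappa_le_ncard_relBd hunion
  have h₂ := relKappa_le_ncard_relBd hinter
  have hfrag : IsFragment E (A ∩ F) := ⟨hinter, by rw [hA.1.2, hF.2] at hsub; omega⟩
  have hcard : A.ncard ≤ (A ∩ F).ncard := hA.2 ▸ atomCard_le_ncard hfrag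
  exact Set.inter_eq_left.mp (Set.eq_of_subset_of_ncard_le Set.inter_subset_left hcard hAfin)

theorem IsRelAtom.two_mul_ncard_add_relKappa_le_card
    (hΩ : ∀ F, IsFragment E F → atomCard E ≤ (relOmega E F).ncard)
    {A : Set V} (hA : IsRelAtom E A) : 2 * A.ncard + relKappa E ≤ Nat.card V := by
  have := ncard_relClos_add_ncard_relOmega (E := E) A
  rw [ncard_relClos, hA.1.2] at this
  have := hA.2 ▸ hΩ A hA.1
  omega

theorem IsRelAtom.image_eq_of_inter_nonempty
    (hΩ : ∀ F, IsFragment E F → atomCard E ≤ (relOmega E F).ncard)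
    {A : Set V} (hA : IsRelAtom E A) {f : V ≃ V} (hf : IsRelAuto E f) (h : (f '' A ∩ A).Nonempty) :
    f '' A = A :=
  Set.eq_of_subset_of_ncard_le ((hA.image_equiv hf).subset_of_inter_nonempty hΩ hA.1 h)
    (Set.ncard_image_of_injective _ f.injective).ge hA.1.1.1

theorem IsRelAtom.pointSym_subrel (hsym : PointSym E)
    (hΩ : ∀ F, IsFragment E F → atomCard E ≤ (relOmega E F).ncard)
    {A : Set V} (hA : IsRelAtom E A) : PointSym (Subrel E (· ∈ A)) := by
  rintro ⟨x, hx⟩ ⟨y, hy⟩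
  obtain ⟨f, hf, rfl⟩ := hsym x y
  have hblock := hA.image_eq_of_inter_nonempty hΩ hf ⟨f x, Set.mem_image_of_mem f hx, hy⟩
  have hmem : ∀ a, a ∈ A ↔ f a ∈ A := fun a ↦ by
    conv_rhs => rw [← hblock]
    exact f.injective.mem_set_image.symm
  exact ⟨f.subtypeEquiv hmem, fun a b ↦ hf a b, rfl⟩

end Atoms

section Counting

variable {V : Type*} {E : V → V → Prop}

theorem ncard_relImage_subrel {A : Set V} (x : A) :
    (relImage (Subrel E (· ∈ A)) x).ncard = (relImage E x ∩ A).ncard := by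
  rw [← Set.ncard_image_of_injective _ Subtype.val_injective]
  congr
  ext z
  simp only [relImage, Set.mem_image, Set.mem_inter_iff, subrel_val]
  exact ⟨fun ⟨w, hw, hwz⟩ ↦ hwz ▸ ⟨hw, w.2⟩, fun ⟨hz, hzA⟩ ↦ ⟨⟨z, hzA⟩, hz, rfl⟩⟩

theorem relImage_sdiff_subset_relBd {A : Set V} {x : V} (hx : x ∈ A) :
    relImage E x \ A ⊆ relBd E A :=
  fun _ ⟨hz, hzA⟩ ↦ ⟨⟨x, hx, hz⟩, hzA⟩

variable [Finite V]

theorem ncard_relImage_le_ncard_relBd_add {A : Set V} {x : V} (hx : x ∈ A) :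
    (relImage E x).ncard ≤ (relBd E A).ncard + (relImage E x ∩ A).ncard := by
  rw [← Set.ncard_inter_add_ncard_sdiff_eq_ncard (relImage E x) A, add_comm]
  exact Nat.add_le_add_right (Set.ncard_le_ncard (relImage_sdiff_subset_relBd hx)) _

open Finset in
theorem ncard_mul_sub_le_ncard_relBd_mul {r s : ℕ} (hdeg : ∀ x, (relImage E x).ncard = r)
    (hindeg : ∀ x, (relImage (flip E) x).ncard = r) {A : Set V}
    (hA : ∀ x ∈ A, (relImage E x ∩ A).ncard = s) :
    A.ncard * (r - s) ≤ (relBd E A).ncard * r := by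
  classical
  have := Fintype.ofFinite V
  rw [Set.ncard_eq_toFinset_card' A, Set.ncard_eq_toFinset_card' (relBd E A)]
  refine card_mul_le_card_mul E (fun x hx ↦ ?_) (fun y _ ↦ ?_)
  · rw [Set.mem_toFinset] at hx
    have hout : ↑((relBd E A).toFinset.bipartiteAbove E x) = relImage E x \ A := by
      rw [coe_bipartiteAbove]
      ext z
      simp only [Set.mem_toFinset, Set.mem_ofPred_eq]
      exact ⟨fun ⟨hz, hxz⟩ ↦ ⟨hxz, hz.2⟩, fun hz ↦ ⟨relImage_sdiff_subset_relBd hx hz, hz.1⟩⟩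
    rw [← Set.ncard_coe_finset, hout, ← hdeg x, ← hA x hx,
      ← Set.ncard_inter_add_ncard_sdiff_eq_ncard (relImage E x) A]
    omega
  · rw [← hindeg y, ← Set.ncard_coe_finset]
    refine Set.ncard_le_ncard fun z hz ↦ ?_
    rw [coe_bipartiteBelow] at hz
    exact hz.2

end Counting

section Balls

variable {V : Type*} {E : V → V → Prop}

theorem exists_relPow_of_mem_iterate_relClos {v x : V} {i : ℕ}
    (h : x ∈ (relClos E)^[i] {v}) : ∃ j ≤ i, relPow E j v x := by
  induction i generalizing x with
  | zero => exact ⟨0, le_rfl, (Set.mem_singleton_iff.mp h).symm⟩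
  | succ i IH =>
    rw [Function.iterate_succ_apply'] at h
    rcases h with h | ⟨y, hy, hyx⟩
    · obtain ⟨j, hj, hvx⟩ := IH h
      exact ⟨j, by omega, hvx⟩
    · obtain ⟨j, hj, hvy⟩ := IH hy
      exact ⟨j + 1, by omega, y, hvy, hyx⟩

theorem relAdm_iterate_relClos [Finite V] {G : ℕ} (hgirth : ∀ k, HasCycle E k → G + 2 ≤ k)
    (v : V) {i : ℕ} (hi : i ≤ G) : relAdm E ((relClos E)^[i] {v}) := by
  refine ⟨Set.toFinite _, ⟨v, ?_⟩, fun h ↦ ?_⟩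
  · induction i with
    | zero => rfl
    | succ i IH => exact Function.iterate_succ_apply' .. ▸ Or.inl (IH (by omega))
  -- an arc back to `v` would close a walk of length at most `G + 1`
  obtain ⟨x, hx, hxv⟩ : v ∈ relSetImage E _ := h ▸ Set.mem_univ v
  obtain ⟨j, hj, hvx⟩ := exists_relPow_of_mem_iterate_relClos hx
  obtain ⟨k, hk, hcyc⟩ := exists_hasCycle_le_of_relPow (j := j) ⟨x, hvx, hxv⟩
  have := hgirth k hcyc
  omega

/-- Each of the first `G` out-balls around `v` grows by at least `κ` vertices. -/
theorem one_add_add_relKappa_mul_le_card [Finite V] (hloop : ∀ x, ¬ E x x) {r G : ℕ}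
    (hdeg : ∀ x, (relImage E x).ncard = r) (hgirth : ∀ k, HasCycle E k → G + 2 ≤ k) (v : V) :
    1 + r + relKappa E * G ≤ Nat.card V := by
  have hball : ∀ m ≤ G, 1 + r + relKappa E * m ≤ ((relClos E)^[m + 1] {v}).ncard := by
    intro m hm
    induction m with
    | zero =>
      simp [ncard_relClos, relBd_singleton hloop, hdeg, add_comm]
    | succ m IH =>
      rw [Function.iterate_succ_apply' _ (m + 1), ncard_relClos]
      have := relKappa_le_ncard_relBd (relAdm_iterate_relClos hgirth v hm)
      have := IH (by omega)
      rw [Nat.mul_succ]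
      omega
  exact (hball G le_rfl).trans (Set.ncard_le_card _)

end Balls

theorem mul_add_two_le_of_atom_bounds {n a r G κ s : ℕ} (hκr : κ < r) (hs : r ≤ κ + s)
    (hsr : s ≤ r) (ha : s * G + 2 ≤ a) (hcnt : a * (r - s) ≤ κ * r)
    (hball : 1 + r + κ * G ≤ n) (hn : 2 * a + κ ≤ n) : r * G + 2 ≤ n := by
  rcases le_or_gt r (2 * s) with hhalf | hhalf
  · nlinarith
  rcases lt_or_ge (s * G) r with hsmall | hbig
  · have : (r - s) * G ≤ κ * G := Nat.mul_le_mul_right G (by omega)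
    have : (r - s) * G + s * G = r * G := by rw [← Nat.add_mul, Nat.sub_add_cancel hsr]
    omega
  zify [hsr] at *
  have hrG : (r : ℤ) ≤ (r - s) * G := by nlinarith
  have hκr : ((s : ℤ) * G + 2) * (r - s) ≤ κ * r := by nlinarith
  -- `G (sG + 2)(r - s) - r (rG - r + 1) = (sG - r + 2)((r - s)G - r) + r`
  have hκG : (r : ℤ) * (r * G - r + 1) ≤ r * (κ * G) := by
    nlinarith [mul_nonneg (by omega : (0:ℤ) ≤ s * G - r + 2) (by omega : (0:ℤ) ≤ (r - s) * G - r)]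
  have := le_of_mul_le_mul_left hκG (by omega)
  omega

universe u

theorem mul_add_two_le_card {V : Type u} [Finite V] [Nonempty V] (E : V → V → Prop) {r G : ℕ}
    (hr : 1 ≤ r) (hloop : ∀ x, ¬ E x x) (hsym : PointSym E)
    (hdeg : ∀ x, (relImage E x).ncard = r) (hgirth : ∀ k, HasCycle E k → G + 2 ≤ k) :
    r * G + 2 ≤ Nat.card V := by
  induction hn : Nat.card V using Nat.strong_induction_on generalizing V E r with
  | _ n IH =>
  subst hn
  have hindeg := ncard_relImage_flip_eq hsym hdeg
  wlog hale : atomCard E ≤ atomCard (flip E) generalizing E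
  · exact this (flip E) hloop hsym.flip hindeg (fun k hk ↦ hgirth k hk.flip) hdeg
      (le_of_not_ge hale)
  obtain ⟨v⟩ := ‹Nonempty V›
  have hball := one_add_add_relKappa_mul_le_card hloop hdeg hgirth v
  rcases le_or_gt r (relKappa E) with hκ | hlt
  · nlinarith
  have hΩ := fun F ↦ atomCard_le_ncard_relOmega (F := F) hdeg hindeg hlt hale
  obtain ⟨A, hA⟩ := exists_isRelAtom (relAdm_singleton hloop v)
  obtain ⟨x₀, hx₀⟩ := hA.1.1.2.1
  set s := (relImage E x₀ ∩ A).ncard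
  have hdegA (x : V) (hx : x ∈ A) : (relImage E x ∩ A).ncard = s := by
    have := (hA.pointSym_subrel hsym hΩ).ncard_relImage_eq ⟨x, hx⟩ ⟨x₀, hx₀⟩
    rwa [ncard_relImage_subrel, ncard_relImage_subrel] at this
  have hs : r ≤ relKappa E + s := hdeg x₀ ▸ hA.1.2 ▸ ncard_relImage_le_ncard_relBd_add hx₀
  have hsr : s ≤ r := hdeg x₀ ▸ Set.ncard_le_ncard Set.inter_subset_left
  have hn := hA.two_mul_ncard_add_relKappa_le_card hΩ
  have hsA : s * G + 2 ≤ A.ncard := by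
    have := hA.1.1.2.1.to_subtype
    have := (Set.ncard_pos hA.1.1.1).mpr hA.1.1.2.1
    rw [← Nat.card_coe_set_eq]
    exact IH _ (by rw [Nat.card_coe_set_eq]; omega) (Subrel E (· ∈ A)) (by omega)
      (fun x ↦ hloop x) (hA.pointSym_subrel hsym hΩ)
      (fun x ↦ (ncard_relImage_subrel x).trans (hdegA x x.2))
      (fun k hk ↦ hgirth k (hk.map Subtype.val_injective fun _ _ h ↦ h)) rfl
  exact mul_add_two_le_of_atom_bounds hlt hs hsr hsA
    (hA.1.2 ▸ ncard_mul_sub_le_ncard_relBd_mul hdeg hindeg hdegA) hball hn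

theorem stmt_18 {V : Type*} [Fintype V] (E : V → V → Prop) (r : ℕ) (hr : 1 ≤ r)
    (hloop : ∀ x, ¬ E x x) (hsym : PointSym E)
    (hdeg : ∀ x, (relImage E x).ncard = r) (g : ℕ)
    (hg : HasCycle E g) (hgmin : ∀ k, HasCycle E k → g ≤ k) :
    g ≤ ⌈((Fintype.card V : ℚ) - 1) / (r : ℚ)⌉₊ + 1 := by
  obtain ⟨G, rfl⟩ : ∃ G, g = G + 2 := ⟨g - 2, by have := hg.two_le hloop; omega⟩
  obtain ⟨v, -⟩ := hg
  have : Nonempty V := ⟨v⟩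
  have hbound := Nat.card_eq_fintype_card (α := V) ▸ mul_add_two_le_card E hr hloop hsym hdeg hgmin
  have hG : (G : ℚ) < ((Fintype.card V : ℚ) - 1) / r := by
    rw [lt_div_iff₀ (by positivity)]
    have : (r * G + 2 : ℚ) ≤ Fintype.card V := by exact_mod_cast hbound
    linarith
  have := Nat.lt_ceil.mpr hG
  omega
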